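/- A sequence x ∈ ℓ_{1,∞} satisfies ε · n_+(ε, x) → 0 as ε → 0 if and only if x lies in the closure (in the ℓ_{1,∞} quasinorm) of the set of sequences with only finitely many nonzero terms. -/
import Mathlib

open MeasureTheory Filter
open scoped ENNReal Topology

noncomputable def countAbove (x : ℕ → ℝ) (ε : ℝ) : ℝ≥0∞ :=
  Measure.count {j : ℕ | ε < |x j|}

noncomputable def weakL1Quasinorm (x : ℕ → ℝ) : ℝ≥0∞ :=
  ⨆ ε > (0 : ℝ), ENNReal.ofReal ε * countAbove x ε

/-- A sequence `x ∈ ℓ_{1,∞}` satisfies `ε · n₊(ε,x) → 0` as `ε → 0⁺` if and only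
if `x` belongs to the closure, in the `ℓ_{1,∞}` quasinorm, of the set of
sequences with only finitely many nonzero terms. -/
theorem weakL1_separable_subspace_characterization
    (x : ℕ → ℝ) (hx0 : Tendsto x atTop (𝓝 0))
    (hx : weakL1Quasinorm x < ⊤) :
    Tendsto (fun ε : ℝ => ENNReal.ofReal ε * countAbove x ε) (𝓝[>] 0) (𝓝 0)
      ↔ ∀ δ : ℝ≥0∞, 0 < δ →
          ∃ y : ℕ → ℝ, {j : ℕ | y j ≠ 0}.Finite ∧
            weakL1Quasinorm (x - y) < δ := by
  constructor
  · intro h δ hδ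
    set δ' := min δ 1 with hδ'def
    have hδ'0 : δ' ≠ 0 := ne_of_gt (lt_min hδ zero_lt_one)
    have hδ't : δ' ≠ ⊤ := by
      simp only [hδ'def, ne_eq, min_eq_top, not_and]
      intro; exact ENNReal.one_ne_top
    have hhalf : 0 < δ' / 2 := ENNReal.half_pos hδ'0
    have hev : {ε : ℝ | ENNReal.ofReal ε * countAbove x ε ≤ δ' / 2} ∈ 𝓝[>] (0 : ℝ) :=
      (ENNReal.tendsto_nhds_zero.mp h) (δ' / 2) hhalf
    obtain ⟨ε0, hε0, hsub⟩ := mem_nhdsGT_iff_exists_Ioc_subset.mp hev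
    have hε0' : (0 : ℝ) < ε0 := hε0
    set y : ℕ → ℝ := fun j => if ε0 < |x j| then x j else 0 with hydef
    refine ⟨y, ?_, ?_⟩
    · have hev2 : {j : ℕ | ¬ |x j| < ε0}.Finite := by
        have : ∀ᶠ j in cofinite, |x j| < ε0 := by
          rw [Nat.cofinite_eq_atTop]
          exact (NormedAddCommGroup.tendsto_nhds_zero.mp hx0) ε0 hε0'
        exact this
      refine hev2.subset fun j hj => ?_
      simp only [hydef, Set.mem_setOf_eq, ne_eq, ite_eq_right_iff, not_forall] at hj
      exact not_lt.mpr hj.choose.le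
    · have hbound : weakL1Quasinorm (x - y) ≤ δ' / 2 := by
        refine iSup₂_le fun ε hε => ?_
        by_cases hle : ε ≤ ε0
        · have hsubset : {j : ℕ | ε < |(x - y) j|} ⊆ {j : ℕ | ε < |x j|} := by
            intro j hj
            simp only [Set.mem_setOf_eq, Pi.sub_apply, hydef] at hj ⊢
            by_cases hcase : ε0 < |x j|
            · simp [hcase] at hj; exact absurd hj (by linarith)
            · simpa [hcase] using hj
          calc ENNReal.ofReal ε * countAbove (x - y) ε
              ≤ ENNReal.ofReal ε * countAbove x ε :=
                mul_le_mul_right (measure_mono hsubset) _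
            _ ≤ δ' / 2 := hsub ⟨hε, hle⟩
        · have hempty : {j : ℕ | ε < |x j - y j|} = ∅ := by
            ext j
            simp only [Set.mem_setOf_eq, hydef, Set.mem_empty_iff_false,
              iff_false, not_lt]
            by_cases hcase : ε0 < |x j|
            · simp [hcase]; linarith
            · simp only [hcase, if_false, sub_zero]
              push_neg at hcase hle
              linarith
          simp [countAbove, hempty]
      calc weakL1Quasinorm (x - y) ≤ δ' / 2 := hbound
        _ < δ' := ENNReal.half_lt_self hδ'0 hδ't
        _ ≤ δ := min_le_left _ _
  · intro h
    rw [ENNReal.tendsto_nhds_zero]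
    intro η hη
    set η' := min η 1 with hη'def
    have hη'0 : η' ≠ 0 := ne_of_gt (lt_min hη zero_lt_one)
    obtain ⟨y, hyfin, hylt⟩ := h (η' / 2) (ENNReal.half_pos hη'0)
    set N : ℝ≥0∞ := Measure.count {j : ℕ | y j ≠ 0} with hNdef
    have hN : N ≠ ⊤ := (Measure.count_apply_lt_top.mpr hyfin).ne
    have htend : Tendsto (fun ε : ℝ => ENNReal.ofReal ε * N) (𝓝[>] (0 : ℝ)) (𝓝 0) := by
      have h1 : Tendsto (fun ε : ℝ => ENNReal.ofReal ε) (𝓝[>] (0 : ℝ)) (𝓝 0) := by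
        have := (ENNReal.continuous_ofReal.tendsto (0 : ℝ)).mono_left
          (nhdsWithin_le_nhds (s := Set.Ioi (0 : ℝ)))
        simpa using this
      simpa using ENNReal.Tendsto.mul_const h1 (Or.inr hN)
    have hevN : ∀ᶠ ε in 𝓝[>] (0 : ℝ), ENNReal.ofReal ε * N ≤ η' / 2 :=
      (ENNReal.tendsto_nhds_zero.mp htend) (η' / 2) (ENNReal.half_pos hη'0)
    filter_upwards [hevN, self_mem_nhdsWithin] with ε hεN hεpos
    have hεpos' : (0 : ℝ) < ε := hεpos
    have hsubset : {j : ℕ | ε < |x j|} ⊆ {j : ℕ | ε < |(x - y) j|} ∪ {j : ℕ | y j ≠ 0} := by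
      intro j hj
      by_cases hcase : y j = 0
      · left; simpa [Pi.sub_apply, hcase] using hj
      · right; exact hcase
    have hc : countAbove x ε ≤ countAbove (x - y) ε + N :=
      le_trans (measure_mono hsubset) (measure_union_le _ _)
    have h1 : ENNReal.ofReal ε * countAbove (x - y) ε ≤ η' / 2 := by
      refine le_trans ?_ hylt.le
      exact le_iSup₂ (f := fun ε (_ : ε > (0 : ℝ)) => ENNReal.ofReal ε * countAbove (x - y) ε)
        ε hεpos'
    calc ENNReal.ofReal ε * countAbove x ε
        ≤ ENNReal.ofReal ε * (countAbove (x - y) ε + N) := mul_le_mul_right hc _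
      _ = ENNReal.ofReal ε * countAbove (x - y) ε + ENNReal.ofReal ε * N := mul_add _ _ _
      _ ≤ η' / 2 + η' / 2 := add_le_add h1 hεN
      _ = η' := ENNReal.add_halves _
      _ ≤ η := min_le_left _ _
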